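/- Let l ≥ 2, let R = k^⊕l * k^⊕2 with p₁,…,p_l the standard orthogonal primitive idempotents of the first factor and q₁,q₂ those of the second factor, let Ā be the k-span of p₁,…,p_{l−1} and B̄ the k-span of q₁ inside R. Let V ⊆ Ā ⊕ B̄ be a k-subspace such that V is not contained in Ā and such that the subalgebra of k^⊕l generated by V ∩ Ā is all of k^⊕l. Let R(V) be the subalgebra of R generated by V. Then the quotient of R by the two-sided ideal generated by all commutators of elements of R(V) is isomorphic as a k-algebra to k^⊕l ⊗_k k^⊕2 (equivalently, to k^⊕2l). -/

import Mathlib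

open scoped TensorProduct

set_option synthInstance.maxHeartbeats 1000000
set_option maxHeartbeats 1000000

/-- A two-element family of types, used to form binary free products. -/
def fam (A B : Type) : Bool → Type
  | true => A
  | false => B

instance famSemiring (A B : Type) [Semiring A] [Semiring B] : ∀ b, Semiring (fam A B b)
  | true => ‹Semiring A›
  | false => ‹Semiring B›

instance famAlgebra (k A B : Type) [CommSemiring k] [Semiring A] [Semiring B]
    [Algebra k A] [Algebra k B] : ∀ b, Algebra k (fam A B b)
  | true => ‹Algebra k A›
  | false => ‹Algebra k B›

/-- The free product (coproduct in the category of unital associative `k`-algebras)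
`A * B` of two `k`-algebras. -/
abbrev FP (k A B : Type) [CommSemiring k] [Semiring A] [Semiring B]
    [Algebra k A] [Algebra k B] : Type :=
  LinearAlgebra.FreeProduct k (fam A B)

/-- The canonical map `A →ₐ[k] A * B`. -/
noncomputable def inl (k A B : Type) [CommSemiring k] [Semiring A] [Semiring B]
    [Algebra k A] [Algebra k B] : A →ₐ[k] FP k A B :=
  LinearAlgebra.FreeProduct.ι k (fam A B) true

/-- The canonical map `B →ₐ[k] A * B`. -/
noncomputable def inr (k A B : Type) [CommSemiring k] [Semiring A] [Semiring B]
    [Algebra k A] [Algebra k B] : B →ₐ[k] FP k A B :=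
  LinearAlgebra.FreeProduct.ι k (fam A B) false

/-- The relation whose induced quotient of `R` is the quotient by the two-sided ideal
generated by all commutators of elements of the subalgebra generated by `S`. -/
def commRel (k R : Type) [CommSemiring k] [Ring R] [Algebra k R] (S : Set R)
    (u v : R) : Prop :=
  (∃ a ∈ Algebra.adjoin k S, ∃ b ∈ Algebra.adjoin k S, u = a * b - b * a) ∧ v = 0

/-- The subspace `Ā ⊆ k^⊕l * k^⊕2` spanned by (the images of) the idempotents
`p₁, …, p_{l-1}`. -/
noncomputable def Abar (k : Type) [Field k] (l : ℕ) :
    Submodule k (FP k (Fin l → k) (Fin 2 → k)) :=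
  Submodule.span k
    {x | ∃ i : Fin l, (i : ℕ) < l - 1 ∧ x = inl k (Fin l → k) (Fin 2 → k) (Pi.single i 1)}

/-- The subspace `B̄ ⊆ k^⊕l * k^⊕2` spanned by (the image of) the idempotent `q₁`. -/
noncomputable def Bbar (k : Type) [Field k] (l : ℕ) :
    Submodule k (FP k (Fin l → k) (Fin 2 → k)) :=
  Submodule.span k {inr k (Fin l → k) (Fin 2 → k) (Pi.single 0 1)}

/-!
Since `V ∩ Ā` generates `k^⊕l` and some `v ∈ V` has a nonzero `q₁`-component, the subalgebra
generated by `V` contains both factors, hence is all of `R`. The quotient is therefore the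
abelianization of `k^⊕l * k^⊕2`; as the factors are commutative, this is the coproduct of
commutative algebras, `k^⊕l ⊗ k^⊕2 ≅ k^⊕2l`.
-/

namespace FP

variable {k A B C : Type} [CommSemiring k] [Semiring A] [Semiring B] [Semiring C]
  [Algebra k A] [Algebra k B] [Algebra k C]

def famHom (f : A →ₐ[k] C) (g : B →ₐ[k] C) : ∀ b, fam A B b →ₐ[k] C
  | true => f
  | false => g

noncomputable def lift (f : A →ₐ[k] C) (g : B →ₐ[k] C) : FP k A B →ₐ[k] C :=
  LinearAlgebra.FreeProduct.lift k (fam A B) fun {b} => famHom f g b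

@[simp] lemma lift_inl (f : A →ₐ[k] C) (g : B →ₐ[k] C) (x : A) :
    lift f g (inl k A B x) = f x :=
  AlgHom.congr_fun (LinearAlgebra.FreeProduct.lift_comp_ι k (fam A B) (i := true) _) x

@[simp] lemma lift_inr (f : A →ₐ[k] C) (g : B →ₐ[k] C) (y : B) :
    lift f g (inr k A B y) = g y :=
  AlgHom.congr_fun (LinearAlgebra.FreeProduct.lift_comp_ι k (fam A B) (i := false) _) y

lemma algHom_ext {f g : FP k A B →ₐ[k] C}
    (hA : f.comp (inl k A B) = g.comp (inl k A B))
    (hB : f.comp (inr k A B) = g.comp (inr k A B)) : f = g := by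
  have key : ∀ h : FP k A B →ₐ[k] C, h.comp (inl k A B) = f.comp (inl k A B) →
      h.comp (inr k A B) = f.comp (inr k A B) →
        h = lift (f.comp (inl k A B)) (f.comp (inr k A B)) := fun h h₁ h₂ =>
    LinearAlgebra.FreeProduct.lift_unique k (fam A B) _ h (by rintro (_ | _) <;> assumption)
  rw [key f rfl rfl, key g hA.symm hB.symm]

lemma range_inl_sup_range_inr : (inl k A B).range ⊔ (inr k A B).range = ⊤ := by
  set S := (inl k A B).range ⊔ (inr k A B).range
  let P : FP k A B →ₐ[k] S :=
    lift ((inl k A B).codRestrict S fun x => le_sup_left (a := (inl k A B).range) ⟨x, rfl⟩)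
      ((inr k A B).codRestrict S fun y => le_sup_right (a := (inl k A B).range) ⟨y, rfl⟩)
  have hP : S.val.comp P = AlgHom.id k (FP k A B) := by
    apply algHom_ext <;> ext <;> simp [P]
  refine eq_top_iff.mpr fun x _ => ?_
  rw [← AlgHom.id_apply (R := k) x, ← hP]
  exact (P x).2

end FP

section Abelianization

open Algebra.TensorProduct

variable {k A B : Type} [CommRing k] [CommRing A] [CommRing B] [Algebra k A] [Algebra k B]

noncomputable def commQuotToTensor (S : Set (FP k A B)) :
    RingQuot (commRel k (FP k A B) S) →ₐ[k] A ⊗[k] B :=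
  RingQuot.liftAlgHom k ⟨FP.lift includeLeft includeRight, by
    rintro _ _ ⟨⟨a, -, b, -, rfl⟩, rfl⟩
    rw [map_sub, map_mul, map_mul, map_zero, mul_comm, sub_self]⟩

lemma mkAlgHom_commRel_mul_comm {S : Set (FP k A B)} (hS : Algebra.adjoin k S = ⊤)
    (x y : FP k A B) :
    RingQuot.mkAlgHom k (commRel k (FP k A B) S) x * RingQuot.mkAlgHom k _ y =
      RingQuot.mkAlgHom k _ y * RingQuot.mkAlgHom k _ x := by
  have hxy : commRel k (FP k A B) S (x * y - y * x) 0 :=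
    ⟨⟨x, hS ▸ trivial, y, hS ▸ trivial, rfl⟩, rfl⟩
  simpa only [map_sub, map_mul, map_zero, sub_eq_zero] using RingQuot.mkAlgHom_rel k hxy

noncomputable def tensorToCommQuot {S : Set (FP k A B)} (hS : Algebra.adjoin k S = ⊤) :
    A ⊗[k] B →ₐ[k] RingQuot (commRel k (FP k A B) S) :=
  lift ((RingQuot.mkAlgHom k _).comp (inl k A B)) ((RingQuot.mkAlgHom k _).comp (inr k A B))
    fun _ _ => mkAlgHom_commRel_mul_comm hS _ _

lemma tensorToCommQuot_tmul {S : Set (FP k A B)} (hS : Algebra.adjoin k S = ⊤) (a : A) (b : B) :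
    tensorToCommQuot hS (a ⊗ₜ b) =
      RingQuot.mkAlgHom k _ (inl k A B a) * RingQuot.mkAlgHom k _ (inr k A B b) :=
  lift_tmul _ _ _ a b

noncomputable def commQuotEquivTensor {S : Set (FP k A B)} (hS : Algebra.adjoin k S = ⊤) :
    RingQuot (commRel k (FP k A B) S) ≃ₐ[k] A ⊗[k] B :=
  AlgEquiv.ofAlgHom (commQuotToTensor S) (tensorToCommQuot hS)
    (by ext <;> simp [commQuotToTensor, tensorToCommQuot_tmul])
    (by
      apply RingQuot.ringQuot_ext'
      apply FP.algHom_ext <;> ext <;> simp [commQuotToTensor, tensorToCommQuot_tmul])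

end Abelianization

def AlgEquiv.piUncurry (R S ι κ : Type) [CommSemiring R] [Semiring S] [Algebra R S] :
    (ι → κ → S) ≃ₐ[R] (ι × κ → S) where
  __ := (Equiv.curry ι κ S).symm
  map_mul' _ _ := rfl
  map_add' _ _ := rfl
  commutes' _ := rfl

noncomputable def finTensorFinAlgEquiv (k : Type) [CommRing k] (m n : ℕ) :
    (Fin n → k) ⊗[k] (Fin m → k) ≃ₐ[k] (Fin (m * n) → k) :=
  (Algebra.TensorProduct.piScalarRight k k (Fin n → k) (Fin m)).trans <|
    (AlgEquiv.piUncurry k k (Fin m) (Fin n)).trans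
      (AlgEquiv.piCongrLeft k (fun _ => k) finProdFinEquiv)

lemma AlgHom.range_le_of_adjoin_eq_top {R A C : Type} [CommSemiring R] [Semiring A] [Semiring C]
    [Algebra R A] [Algebra R C] (f : A →ₐ[R] C) {s : Set A} (hs : Algebra.adjoin R s = ⊤)
    {T : Subalgebra R C} (h : f '' s ⊆ T) : f.range ≤ T := by
  rw [← Algebra.map_top, ← hs, AlgHom.map_adjoin]
  exact Algebra.adjoin_le h

lemma adjoin_single_zero_fin_two (k : Type) [CommRing k] :
    Algebra.adjoin k ({Pi.single 0 1} : Set (Fin 2 → k)) = ⊤ := by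
  refine eq_top_iff.mpr fun y _ => ?_
  have hy : y = y 1 • (1 : Fin 2 → k) + (y 0 - y 1) • Pi.single 0 1 := by
    funext i
    fin_cases i <;> simp
  rw [hy]
  exact add_mem (Subalgebra.smul_mem _ (one_mem _) _)
    (Subalgebra.smul_mem _ (Algebra.subset_adjoin (Set.mem_singleton _)) _)

lemma adjoin_eq_top_of_not_le_Abar {k : Type} [Field k] {l : ℕ}
    {V : Submodule k (FP k (Fin l → k) (Fin 2 → k))}
    (hVsub : V ≤ Abar k l ⊔ Bbar k l) (hVA : ¬ V ≤ Abar k l)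
    (hgen : Algebra.adjoin k ((inl k (Fin l → k) (Fin 2 → k)) ⁻¹'
      ((V ⊓ Abar k l : Submodule k (FP k (Fin l → k) (Fin 2 → k))) : Set _)) = ⊤) :
    Algebra.adjoin k (V : Set (FP k (Fin l → k) (Fin 2 → k))) = ⊤ := by
  set T := Algebra.adjoin k (V : Set (FP k (Fin l → k) (Fin 2 → k)))
  have hA : (inl k (Fin l → k) (Fin 2 → k)).range ≤ T :=
    AlgHom.range_le_of_adjoin_eq_top _ hgen fun _ ⟨_, hx, hxv⟩ =>
      Algebra.subset_adjoin (hxv ▸ (Submodule.mem_inf.mp hx).1)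
  have hAbar : Abar k l ≤ Subalgebra.toSubmodule T :=
    Submodule.span_le.mpr fun _ ⟨i, _, hx⟩ => hx ▸ hA ⟨Pi.single i 1, rfl⟩
  obtain ⟨v, hvV, hvA⟩ := SetLike.not_le_iff_exists.mp hVA
  obtain ⟨a, ha, b, hb, rfl⟩ := Submodule.mem_sup.mp (hVsub hvV)
  obtain ⟨c, rfl⟩ := Submodule.mem_span_singleton.mp hb
  have hc : c ≠ 0 := by
    rintro rfl
    exact hvA (by simpa using ha)
  have hq : inr k (Fin l → k) (Fin 2 → k) (Pi.single 0 1) ∈ T := by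
    have h := Subalgebra.smul_mem T (sub_mem (Algebra.subset_adjoin hvV) (hAbar ha)) c⁻¹
    rwa [add_sub_cancel_left, smul_smul, inv_mul_cancel₀ hc, one_smul] at h
  have hB : (inr k (Fin l → k) (Fin 2 → k)).range ≤ T :=
    AlgHom.range_le_of_adjoin_eq_top _ (adjoin_single_zero_fin_two k) <| by
      rwa [Set.image_singleton, Set.singleton_subset_iff]
  rw [eq_top_iff, ← FP.range_inl_sup_range_inr]
  exact sup_le hA hB

theorem statement19_general (k : Type) [Field k]
    (l : ℕ)
    (V : Submodule k (FP k (Fin l → k) (Fin 2 → k)))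
    -- `V ⊆ Ā ⊕ B̄`
    (hVsub : V ≤ Abar k l ⊔ Bbar k l)
    -- `V` is not contained in `Ā`
    (hVA : ¬ V ≤ Abar k l)
    -- the subalgebra of `k^⊕l` generated by `V ∩ Ā` is all of `k^⊕l`
    (hgen : Algebra.adjoin k
        ((inl k (Fin l → k) (Fin 2 → k)) ⁻¹'
          ((V ⊓ Abar k l : Submodule k (FP k (Fin l → k) (Fin 2 → k))) :
            Set (FP k (Fin l → k) (Fin 2 → k)))) = ⊤) :
    Nonempty
      (RingQuot (commRel k (FP k (Fin l → k) (Fin 2 → k))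
          (V : Set (FP k (Fin l → k) (Fin 2 → k))))
        ≃ₐ[k] ((Fin l → k) ⊗[k] (Fin 2 → k))) ∧
    Nonempty
      (RingQuot (commRel k (FP k (Fin l → k) (Fin 2 → k))
          (V : Set (FP k (Fin l → k) (Fin 2 → k))))
        ≃ₐ[k] (Fin (2 * l) → k)) := by
  have hV := adjoin_eq_top_of_not_le_Abar hVsub hVA hgen
  exact ⟨⟨commQuotEquivTensor hV⟩,
    ⟨(commQuotEquivTensor hV).trans (finTensorFinAlgEquiv k 2 l)⟩⟩

theorem statement19 (k : Type) [Field k] [IsAlgClosed k] [CharZero k]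
    (l : ℕ) (hl : 2 ≤ l)
    (V : Submodule k (FP k (Fin l → k) (Fin 2 → k)))
    -- `V ⊆ Ā ⊕ B̄`
    (hVsub : V ≤ Abar k l ⊔ Bbar k l)
    -- `V` is not contained in `Ā`
    (hVA : ¬ V ≤ Abar k l)
    -- the subalgebra of `k^⊕l` generated by `V ∩ Ā` is all of `k^⊕l`
    (hgen : Algebra.adjoin k
        ((inl k (Fin l → k) (Fin 2 → k)) ⁻¹'
          ((V ⊓ Abar k l : Submodule k (FP k (Fin l → k) (Fin 2 → k))) :
            Set (FP k (Fin l → k) (Fin 2 → k)))) = ⊤) :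
    Nonempty
      (RingQuot (commRel k (FP k (Fin l → k) (Fin 2 → k))
          (V : Set (FP k (Fin l → k) (Fin 2 → k))))
        ≃ₐ[k] ((Fin l → k) ⊗[k] (Fin 2 → k))) ∧
    Nonempty
      (RingQuot (commRel k (FP k (Fin l → k) (Fin 2 → k))
          (V : Set (FP k (Fin l → k) (Fin 2 → k))))
        ≃ₐ[k] (Fin (2 * l) → k)) :=
  statement19_general k l V hVsub hVA hgen
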